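/- arXiv:2401.11310 — 2 statements merged into one kernel-verified Lean document; each statement's English description precedes it below -/
import Mathlib

section
/- Let X be a compact metric space, (x_i) a sequence of points of X, (p_i) a fast growing sequence, and z = z((p_i),(x_i)) the Oxtoby sequence. Let y ∈ O̅(z) with Aper(y) ≠ ∅. Then: (1) for every k ∈ Aper(y) one has y(k) ∈ L((x_i)); (2) for every x ∈ L((x_i)) there exists y' ∈ O̅(z) such that y' has the same p_i-skeleton as y for every i and y'(k) = x for all k ∈ Aper(y'). -/
open Filter Topology

section Defs

variable {X : Type*}

/-- The shift by `m`: `(shiftZ m z) n = z (n + m)`, so `shiftZ 1` is the left shift `S`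
and `shiftZ m = S^m`. -/
def shiftZ (m : ℤ) (z : ℤ → X) : ℤ → X := fun n => z (n + m)

/-- `Per_p(z)`: the set of positions `n` such that `z m = z n` for all `m ≡ n (mod p)`. -/
def PerSet (p : ℕ) (z : ℤ → X) : Set ℤ :=
  {n : ℤ | ∀ m : ℤ, (p : ℤ) ∣ m - n → z m = z n}

/-- `Per(z) = ⋃_{p ≥ 1} Per_p(z)`. -/
def PerFull (z : ℤ → X) : Set ℤ := {n : ℤ | ∃ p : ℕ, 1 ≤ p ∧ n ∈ PerSet p z}

/-- A Toeplitz sequence: every position is periodic. -/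
def IsToeplitz (z : ℤ → X) : Prop := ∀ n : ℤ, n ∈ PerFull z

/-- A non-periodic sequence: `S^m z ≠ z` for all `m ≠ 0`. -/
def NonPeriodicSeq (z : ℤ → X) : Prop := ∀ m : ℤ, m ≠ 0 → shiftZ m z ≠ z

/-- `u` and `v` have the same `p`-skeleton. -/
def SamePSkeleton (p : ℕ) (u v : ℤ → X) : Prop :=
  PerSet p u = PerSet p v ∧ ∀ n ∈ PerSet p u, u n = v n

/-- A period structure of a (non-periodic) Toeplitz sequence `z`. -/
def IsPeriodStructure (p : ℕ → ℕ) (z : ℤ → X) : Prop :=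
  (∀ i, 1 ≤ p i) ∧
  (∀ i q, 1 ≤ q → q < p i → PerSet q z ≠ PerSet (p i) z) ∧
  (∀ i, p i ∣ p (i + 1)) ∧
  (∀ n : ℤ, ∃ i, n ∈ PerSet (p i) z)

/-- A fast growing sequence of positive integers. -/
def FastGrowing (p : ℕ → ℕ) : Prop :=
  p 0 = 1 ∧ (∀ i, p i ∣ p (i + 1)) ∧ 3 ≤ p 1 ∧ ∀ i, 3 * p i ≤ p (i + 1)

/-- `oxDefined p i` is the set of positions of the Oxtoby sequence that are filled in
after step `i` of the inductive construction (step `i+1` fills, for each `k ≡ 0` or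
`-1 (mod p_{i+1}/p_i)`, the still-empty positions `J(i,k)` of the block
`[k p_i, (k+1) p_i)`). -/
def oxDefined (p : ℕ → ℕ) : ℕ → Set ℤ
  | 0 => ∅
  | i + 1 =>
      oxDefined p i ∪
        {n : ℤ | ∃ k : ℤ,
          (((p (i + 1) / p i : ℕ) : ℤ) ∣ k ∨ ((p (i + 1) / p i : ℕ) : ℤ) ∣ (k + 1)) ∧
          k * (p i : ℤ) ≤ n ∧ n < (k + 1) * (p i : ℤ) ∧ n ∉ oxDefined p i}

/-- `J(i,k)`: the set of positions in `[k p_i, (k+1) p_i)` still undefined after step `i`. -/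
def oxJ (p : ℕ → ℕ) (i : ℕ) (k : ℤ) : Set ℤ :=
  {n : ℤ | k * (p i : ℤ) ≤ n ∧ n < (k + 1) * (p i : ℤ) ∧ n ∉ oxDefined p i}

/-- The Oxtoby sequence `z((p_i),(x_i))`: position `n` receives the value `x_i` where `i`
is the first step after which `n` is defined. -/
noncomputable def oxtoby (p : ℕ → ℕ) (x : ℕ → X) : ℤ → X :=
  fun n => x (sInf {i : ℕ | n ∈ oxDefined p i})

/-- The reverse of a bi-infinite sequence: `x⁻¹(n) = x(-n)`. -/
def revSeq (z : ℤ → X) : ℤ → X := fun n => z (-n)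

/-- `[n0, n1]` is a maximal `p`-periodic block in `x`. -/
def IsMaxPeriodicBlock (p : ℕ) (x : ℤ → X) (n0 n1 : ℤ) : Prop :=
  n0 ≤ n1 ∧ Set.Icc n0 n1 ⊆ PerSet p x ∧
    ∀ n0' n1' : ℤ, n0' ≤ n0 → n1 ≤ n1' → Set.Icc n0' n1' ⊆ PerSet p x →
      n0' = n0 ∧ n1' = n1

variable [TopologicalSpace X]

/-- The orbit closure of `z` in `X^ℤ` with the product topology. -/
def orbitClosure (z : ℤ → X) : Set (ℤ → X) :=
  closure {y : ℤ → X | ∃ m : ℤ, y = shiftZ m z}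

/-- The ω-limit set of a sequence: all limits of convergent subsequences. -/
def omegaLimitSet (x : ℕ → X) : Set X :=
  {a : X | ∃ φ : ℕ → ℕ, StrictMono φ ∧ Tendsto (x ∘ φ) atTop (𝓝 a)}

/-- Two sequences have the same topological type if exactly the same subsequences
converge. -/
def SameTopType {Y : Type*} [TopologicalSpace Y] (x : ℕ → X) (y : ℕ → Y) : Prop :=
  ∀ φ : ℕ → ℕ, StrictMono φ →
    ((∃ a, Tendsto (x ∘ φ) atTop (𝓝 a)) ↔ (∃ a, Tendsto (y ∘ φ) atTop (𝓝 a)))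

/-- `f` is a conjugacy between the shift-invariant sets `A` and `B`: a homeomorphism
from `A` onto `B` commuting with the shift. -/
def IsConjugacy (A B : Set (ℤ → X)) (f : (ℤ → X) → (ℤ → X)) : Prop :=
  Set.MapsTo f A B ∧ ContinuousOn f A ∧
    (∃ g : (ℤ → X) → (ℤ → X), Set.MapsTo g B A ∧ ContinuousOn g B ∧
      (∀ a ∈ A, g (f a) = a) ∧ (∀ b ∈ B, f (g b) = b)) ∧
    ∀ a ∈ A, f (shiftZ 1 a) = shiftZ 1 (f a)

/-- The `m`-th iterate (for `m : ℤ`) of a self-homeomorphism. -/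
def iterZ {Y : Type*} [TopologicalSpace Y] (f : Y ≃ₜ Y) (m : ℤ) (a : Y) : Y :=
  ((f.toEquiv ^ m : Equiv.Perm Y)) a

end Defs

section OxAux

variable {X : Type*} {p : ℕ → ℕ}

lemma fg_pos (hp : FastGrowing p) : ∀ i, 1 ≤ p i := by
  intro i
  induction i with
  | zero => simp [hp.1]
  | succ i ih => have := hp.2.2.2 i; omega

lemma fg_dvd_of_le (hp : FastGrowing p) : ∀ {i j : ℕ}, i ≤ j → p i ∣ p j := by
  intro i j h
  induction j, h using Nat.le_induction with
  | base => rfl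
  | succ j hij ih => exact ih.trans (hp.2.1 j)

lemma fg_lt (hp : FastGrowing p) : ∀ i, i + 1 ≤ p i := by
  intro i
  induction i with
  | zero => simp [hp.1]
  | succ i ih => have := hp.2.2.2 i; omega

lemma fg_mono (hp : FastGrowing p) {i j : ℕ} (h : i ≤ j) : p i ≤ p j :=
  Nat.le_of_dvd (fg_pos hp j) (fg_dvd_of_le hp h)

lemma fg_q_mul (hp : FastGrowing p) (i : ℕ) :
    ((p (i + 1) / p i : ℕ) : ℤ) * (p i : ℤ) = (p (i + 1) : ℤ) := by
  exact_mod_cast congrArg (Nat.cast (R := ℤ)) (Nat.div_mul_cancel (hp.2.1 i))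

lemma oxDefined_zero : oxDefined p 0 = (∅ : Set ℤ) := rfl

lemma oxDefined_add (hp : FastGrowing p) :
    ∀ (i : ℕ) (n t : ℤ), n ∈ oxDefined p i → n + t * (p i : ℤ) ∈ oxDefined p i := by
  intro i
  induction i with
  | zero => intro n t h; simp [oxDefined] at h
  | succ i ih =>
    intro n t h
    have hq : ((p (i + 1) / p i : ℕ) : ℤ) * (p i : ℤ) = (p (i + 1) : ℤ) := fg_q_mul hp i
    set q : ℤ := ((p (i + 1) / p i : ℕ) : ℤ) with hqdef
    have e : t * (p (i + 1) : ℤ) = (t * q) * (p i : ℤ) := by rw [mul_assoc, hq]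
    rcases h with h | ⟨k, hk, h1, h2, h3⟩
    · left
      rw [e]
      exact ih n (t * q) h
    · right
      refine ⟨k + t * q, ?_, ?_, ?_, ?_⟩
      · rcases hk with hk | hk
        · exact Or.inl (dvd_add hk (dvd_mul_left q t))
        · refine Or.inr ?_
          have : k + t * q + 1 = (k + 1) + t * q := by ring
          rw [this]
          exact dvd_add hk (dvd_mul_left q t)
      · have : (k + t * q) * (p i : ℤ) = k * (p i : ℤ) + t * (p (i + 1) : ℤ) := by
          rw [e]; ring
        rw [this]; linarith
      · have : (k + t * q + 1) * (p i : ℤ) = (k + 1) * (p i : ℤ) + t * (p (i + 1) : ℤ) := by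
          rw [e]; ring
        rw [this]; linarith
      · intro hmem
        apply h3
        have := ih _ (-(t * q)) hmem
        have e2 : n + t * (p (i + 1) : ℤ) + -(t * q) * (p i : ℤ) = n := by rw [e]; ring
        rwa [e2] at this

lemma oxDefined_dvd (hp : FastGrowing p) {i : ℕ} {n m : ℤ}
    (h : (p i : ℤ) ∣ m - n) (hn : n ∈ oxDefined p i) : m ∈ oxDefined p i := by
  obtain ⟨t, ht⟩ := h
  have : m = n + t * (p i : ℤ) := by linarith [ht]
  rw [this]
  exact oxDefined_add hp i n t hn

lemma oxDefined_mono (hp : FastGrowing p) {i j : ℕ} (h : i ≤ j) :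
    oxDefined p i ⊆ oxDefined p j := by
  induction j, h using Nat.le_induction with
  | base => exact subset_rfl
  | succ j hij ih => exact ih.trans (by intro n hn; exact Or.inl hn)

lemma oxDefined_total (hp : FastGrowing p) (n : ℤ) : ∃ i, n ∈ oxDefined p i := by
  set i := n.natAbs with hi
  have habs : |n| < (p i : ℤ) := by
    have h1 : i + 1 ≤ p i := fg_lt hp i
    have : (i : ℤ) < (p i : ℤ) := by exact_mod_cast h1
    rwa [Int.abs_eq_natAbs]
    
  by_cases h : n ∈ oxDefined p i
  · exact ⟨i, h⟩
  · refine ⟨i + 1, Or.inr ?_⟩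
    rcases le_or_gt 0 n with hn0 | hn0
    · exact ⟨0, Or.inl (dvd_zero _), by simpa using hn0, by simpa using lt_of_abs_lt habs, h⟩
    · refine ⟨-1, Or.inr (by norm_num), ?_, ?_, h⟩
      · have := neg_lt_of_abs_lt habs
        simpa using this.le
      · simpa using hn0

lemma oxtoby_perSet (hp : FastGrowing p) (x : ℕ → X) {i : ℕ} {n m : ℤ}
    (hn : n ∈ oxDefined p i) (h : (p i : ℤ) ∣ m - n) :
    oxtoby p x m = oxtoby p x n := by
  have hm : m ∈ oxDefined p i := oxDefined_dvd hp h hn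
  have hAn : {j | n ∈ oxDefined p j}.Nonempty := ⟨i, hn⟩
  have hAm : {j | m ∈ oxDefined p j}.Nonempty := ⟨i, hm⟩
  have key : ∀ a b : ℤ, a ∈ oxDefined p i → (p i : ℤ) ∣ b - a →
      sInf {j | b ∈ oxDefined p j} ≤ sInf {j | a ∈ oxDefined p j} := by
    intro a b ha hab
    have hmem := Nat.sInf_mem (⟨i, ha⟩ : {j | a ∈ oxDefined p j}.Nonempty)
    have hle : sInf {j | a ∈ oxDefined p j} ≤ i := Nat.sInf_le ha
    have hdvd : (p (sInf {j | a ∈ oxDefined p j}) : ℤ) ∣ (p i : ℤ) := by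
      exact_mod_cast fg_dvd_of_le hp hle
    exact Nat.sInf_le (oxDefined_dvd hp (hdvd.trans hab) hmem)
  have h1 := key n m hn h
  have h2 := key m n hm (by simpa using (dvd_neg.mpr h))
  have : sInf {j | m ∈ oxDefined p j} = sInf {j | n ∈ oxDefined p j} := le_antisymm h1 h2
  unfold oxtoby
  rw [this]

lemma oxtoby_fill (hp : FastGrowing p) (x : ℕ → X) {i : ℕ} {n : ℤ}
    (h1 : n ∉ oxDefined p i) (h2 : n ∈ oxDefined p (i + 1)) :
    oxtoby p x n = x (i + 1) := by
  have : sInf {j | n ∈ oxDefined p j} = i + 1 := by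
    refine le_antisymm (Nat.sInf_le h2) ?_
    have hmem := Nat.sInf_mem (⟨i + 1, h2⟩ : {j | n ∈ oxDefined p j}.Nonempty)
    by_contra hlt
    push_neg at hlt
    exact h1 (oxDefined_mono hp (by omega) hmem)
  unfold oxtoby
  rw [this]

lemma exists_fill_next (hp : FastGrowing p) {i : ℕ} {n : ℤ} (h : n ∉ oxDefined p i) :
    ∃ t : ℤ, n + t * (p i : ℤ) ∈ oxDefined p (i + 1) ∧ n + t * (p i : ℤ) ∉ oxDefined p i := by
  have hpi : (0 : ℤ) < (p i : ℤ) := by exact_mod_cast fg_pos hp i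
  refine ⟨-(n / (p i : ℤ)), ?_, ?_⟩
  · have he : n + -(n / (p i : ℤ)) * (p i : ℤ) = n % (p i : ℤ) := by
      have := Int.mul_ediv_add_emod n (p i : ℤ)
      ring_nf
      linarith [this]
    rw [he]
    refine Or.inr ⟨0, Or.inl (dvd_zero _), ?_, ?_, ?_⟩
    · simpa using Int.emod_nonneg n (ne_of_gt hpi)
    · simpa using Int.emod_lt_of_pos n hpi
    · intro hmem
      exact h (oxDefined_dvd hp ⟨n / (p i : ℤ), by rw [← he]; ring⟩ hmem)
  · intro hmem
    exact h (oxDefined_dvd hp ⟨-(-(n / (p i : ℤ))), by push_cast; ring⟩ hmem)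

lemma omega_char {X : Type*} [MetricSpace X] {x : ℕ → X} {a : X} :
    a ∈ omegaLimitSet x ↔ ∀ N : ℕ, ∀ ε : ℝ, 0 < ε → ∃ c, N ≤ c ∧ dist (x c) a < ε := by
  constructor
  · rintro ⟨φ, hφ, hconv⟩ N ε hε
    obtain ⟨M, hM⟩ := (Metric.tendsto_atTop.mp hconv) ε hε
    refine ⟨φ (max M N), le_trans (le_max_right M N) (hφ.le_apply), ?_⟩
    exact hM (max M N) (le_max_left M N)
  · intro h
    have H : ∀ N l : ℕ, ∃ c, N ≤ c ∧ dist (x c) a < 1 / ((l : ℝ) + 1) :=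
      fun N l => h N _ (by positivity)
    let φ : ℕ → ℕ := fun l =>
      Nat.rec (Classical.choose (H 0 0)) (fun l prev => Classical.choose (H (prev + 1) (l + 1))) l
    have hφ0 := Classical.choose_spec (H 0 0)
    have hφs : ∀ l, φ l + 1 ≤ φ (l + 1) ∧ dist (x (φ (l + 1))) a < 1 / ((l : ℝ) + 1 + 1) := by
      intro l
      have h1 : φ l + 1 ≤ φ (l + 1) ∧ dist (x (φ (l + 1))) a < 1 / (((l + 1 : ℕ) : ℝ) + 1) :=
        Classical.choose_spec (H (φ l + 1) (l + 1))
      refine ⟨h1.1, ?_⟩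
      have h2 := h1.2
      push_cast at h2
      linarith
    have hmono : StrictMono φ := strictMono_nat_of_lt_succ (fun l => by have := (hφs l).1; omega)
    have hdist : ∀ l, dist (x (φ l)) a < 1 / ((l : ℝ) + 1) := by
      intro l
      cases l with
      | zero =>
        have h0 : dist (x (φ 0)) a < 1 / (((0 : ℕ) : ℝ) + 1) := hφ0.2
        simpa using h0
      | succ l =>
        have := (hφs l).2
        push_cast at this ⊢
        linarith
    refine ⟨φ, hmono, Metric.tendsto_atTop.mpr ?_⟩
    intro ε hε
    obtain ⟨l₀, hl₀⟩ := exists_nat_one_div_lt hε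
    refine ⟨l₀, fun l hl => lt_trans (lt_of_lt_of_le (hdist l) ?_) hl₀⟩
    apply one_div_le_one_div_of_le (by positivity)
    push_cast
    linarith [(Nat.cast_le (α := ℝ)).mpr hl]

end OxAux


/-- Lemma `Will`: if `y` in the orbit closure of the Oxtoby sequence has
nonempty aperiodic part, then (1) all its aperiodic values lie in `L((x_i))`, and
(2) every point of `L((x_i))` is realized as the constant aperiodic value of some `y'`
in the orbit closure having the same `p_i`-skeleton as `y` for every `i`. -/
theorem oxtoby_aperiodic_values {X : Type*} [MetricSpace X] [CompactSpace X]
    (x : ℕ → X) (p : ℕ → ℕ) (hp : FastGrowing p)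
    (y : ℤ → X) (hy : y ∈ orbitClosure (oxtoby p x))
    (haper : ∃ k : ℤ, k ∉ PerFull y) :
    (∀ k : ℤ, k ∉ PerFull y → y k ∈ omegaLimitSet x) ∧
      ∀ a ∈ omegaLimitSet x, ∃ y' ∈ orbitClosure (oxtoby p x),
        (∀ i, SamePSkeleton (p i) y' y) ∧ ∀ k : ℤ, k ∉ PerFull y' → y' k = a := by
  classical
  obtain ⟨u, hu_mem, hu_tend⟩ := mem_closure_iff_seq_limit.mp hy
  choose m hm using hu_mem
  have hpt : ∀ n : ℤ, Tendsto (fun j => oxtoby p x (n + m j)) atTop (𝓝 (y n)) := by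
    intro n
    refine (tendsto_pi_nhds.mp hu_tend n).congr (fun j => ?_)
    rw [hm j]; rfl
  set U : Ultrafilter ℕ := Ultrafilter.of atTop with hUdef
  have hU : (U : Filter ℕ) ≤ atTop := Ultrafilter.of_le atTop
  have hptU : ∀ n : ℤ, Tendsto (fun j => oxtoby p x (n + m j)) U (𝓝 (y n)) :=
    fun n => (hpt n).mono_left hU
  -- residues of the shifts along the ultrafilter
  have hrex : ∀ i : ℕ, ∃ r : ℤ, {j | (p i : ℤ) ∣ m j - r} ∈ U := by
    intro i
    have hpi : (0 : ℤ) < (p i : ℤ) := by exact_mod_cast fg_pos hp i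
    have hfin : (Set.Ico (0 : ℤ) (p i : ℤ)).Finite := Set.finite_Ico _ _
    have hmem : Set.Ico (0 : ℤ) (p i : ℤ) ∈ Ultrafilter.map (fun j => m j % (p i : ℤ)) U := by
      refine Ultrafilter.mem_map.mpr ?_
      have : (fun j => m j % (p i : ℤ)) ⁻¹' (Set.Ico (0 : ℤ) (p i : ℤ)) = Set.univ := by
        refine Set.eq_univ_of_forall (fun j => ?_)
        exact ⟨Int.emod_nonneg _ (ne_of_gt hpi), Int.emod_lt_of_pos _ hpi⟩
      rw [this]; exact Filter.univ_mem
    obtain ⟨c, _, hpure⟩ := Ultrafilter.eq_pure_of_finite_mem hfin hmem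
    refine ⟨c, Filter.mem_of_superset ?_ (fun j hj => Int.dvd_self_sub_of_emod_eq hj)⟩
    have h1 : {c} ∈ Ultrafilter.map (fun j => m j % (p i : ℤ)) U := by
      rw [hpure]; exact Ultrafilter.mem_pure.mpr rfl
    exact Ultrafilter.mem_map.mp h1
  choose r hrU using hrex
  have hrcons : ∀ i, (p i : ℤ) ∣ r (i + 1) - r i := by
    intro i
    obtain ⟨j, hj1, hj2⟩ := Ultrafilter.nonempty_of_mem (inter_mem (hrU i) (hrU (i + 1)))
    have h2 : (p i : ℤ) ∣ m j - r (i + 1) :=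
      dvd_trans (Int.natCast_dvd_natCast.mpr (hp.2.1 i)) hj2
    have h3 := dvd_sub hj1 h2
    have e : (m j - r i) - (m j - r (i + 1)) = r (i + 1) - r i := by ring
    rwa [e] at h3
  have hrdvd : ∀ {i l : ℕ}, i ≤ l → (p i : ℤ) ∣ r l - r i := by
    intro i l h
    induction l, h using Nat.le_induction with
    | base => simp
    | succ l hil ih =>
      have h1 : (p i : ℤ) ∣ r (l + 1) - r l :=
        dvd_trans (Int.natCast_dvd_natCast.mpr (fg_dvd_of_le hp hil)) (hrcons l)
      have h2 := dvd_add ih h1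
      have e : (r l - r i) + (r (l + 1) - r l) = r (l + 1) - r i := by ring
      rwa [e] at h2
  set G : Set ℤ := {n : ℤ | ∃ i, n + r i ∈ oxDefined p i} with hGdef
  have hup : ∀ {i i' : ℕ}, i ≤ i' → ∀ {n : ℤ}, n + r i ∈ oxDefined p i →
      n + r i' ∈ oxDefined p i' := by
    intro i i' h n hn
    have h1 : (p i : ℤ) ∣ (n + r i') - (n + r i) := by
      have := hrdvd h
      have e : (n + r i') - (n + r i) = r i' - r i := by ring
      rwa [e]
    exact oxDefined_mono hp h (oxDefined_dvd hp h1 hn)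
  have hskel : ∀ (i : ℕ) (n : ℤ), n + r i ∈ oxDefined p i → y n = oxtoby p x (n + r i) := by
    intro i n hn
    refine tendsto_nhds_unique (hptU n) (Filter.Tendsto.congr' ?_ tendsto_const_nhds)
    refine eventuallyEq_of_mem (hrU i) (fun j hj => ?_)
    refine (oxtoby_perSet hp x hn ?_).symm
    have e : (n + m j) - (n + r i) = m j - r i := by ring
    rw [e]; exact hj
  have hskelPer : ∀ (i : ℕ) (n : ℤ), n + r i ∈ oxDefined p i → n ∈ PerSet (p i) y := by
    intro i n hn m' hdvd
    have hd : (p i : ℤ) ∣ (m' + r i) - (n + r i) := by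
      have e : (m' + r i) - (n + r i) = m' - n := by ring
      rw [e]; exact hdvd
    have hm' : m' + r i ∈ oxDefined p i := oxDefined_dvd hp hd hn
    rw [hskel i m' hm', hskel i n hn]
    exact oxtoby_perSet hp x hn hd
  have hGperFull : ∀ n ∈ G, n ∈ PerFull y := by
    rintro n ⟨i, hi⟩
    exact ⟨p i, fg_pos hp i, hskelPer i n hi⟩
  have hnotG : ∀ n : ℤ, n ∉ G → ∀ i : ℕ, {j | n + m j ∉ oxDefined p i} ∈ U := by
    intro n hn i
    have hA : {j | n + m j ∈ oxDefined p i} ∉ U := by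
      intro hA
      obtain ⟨j, hj1, hj2⟩ := Ultrafilter.nonempty_of_mem (inter_mem hA (hrU i))
      refine hn ⟨i, oxDefined_dvd hp ?_ hj1⟩
      have e : (n + r i) - (n + m j) = -(m j - r i) := by ring
      rw [e]; exact dvd_neg.mpr hj2
    have h2 := Ultrafilter.compl_mem_iff_notMem.mpr hA
    simpa [Set.compl_setOf] using h2
  have hzc : ∀ (n : ℤ) (j : ℕ),
      oxtoby p x (n + m j) = x (sInf {i | n + m j ∈ oxDefined p i}) := fun _ _ => rfl
  have hctend : ∀ n ∉ G, Tendsto (fun j => sInf {i | n + m j ∈ oxDefined p i}) U atTop := by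
    intro n hn
    refine Filter.tendsto_atTop.mpr (fun b => ?_)
    refine Filter.eventually_of_mem (hnotG n hn b) (fun j hj => ?_)
    have hne : {i | n + m j ∈ oxDefined p i}.Nonempty := oxDefined_total hp _
    have hmem := Nat.sInf_mem hne
    by_contra hlt
    push_neg at hlt
    exact hj (oxDefined_mono hp (by omega) hmem)
  have hvalU : ∀ n ∉ G,
      Tendsto (fun j => x (sInf {i | n + m j ∈ oxDefined p i})) U (𝓝 (y n)) :=
    fun n hn => (hptU n).congr (fun j => hzc n j)
  have hconstTail : ∀ (i₀ : ℕ) (b : X), (∀ l, i₀ ≤ l → x (l + 1) = b) →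
      ∀ n ∉ G, y n = b := by
    intro i₀ b hb n hn
    refine tendsto_nhds_unique (hvalU n hn) (Filter.Tendsto.congr' ?_ tendsto_const_nhds)
    have hev : ∀ᶠ j in (U : Filter ℕ), i₀ + 1 ≤ sInf {i | n + m j ∈ oxDefined p i} :=
      (hctend n hn).eventually (eventually_ge_atTop (i₀ + 1))
    refine hev.mono (fun j hj => ?_)
    show b = x (sInf {i | n + m j ∈ oxDefined p i})
    have e : sInf {i | n + m j ∈ oxDefined p i} - 1 + 1 = sInf {i | n + m j ∈ oxDefined p i} := by
      omega
    rw [← e]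
    exact (hb _ (by omega)).symm
  have part1 : ∀ k : ℤ, k ∉ PerFull y → y k ∈ omegaLimitSet x := by
    intro k hk
    have hkG : k ∉ G := fun h => hk (hGperFull k h)
    refine omega_char.mpr (fun N ε hε => ?_)
    have h1 : ∀ᶠ j in (U : Filter ℕ), N ≤ sInf {i | k + m j ∈ oxDefined p i} :=
      (hctend k hkG).eventually (eventually_ge_atTop N)
    have h2 : ∀ᶠ j in (U : Filter ℕ),
        dist (x (sInf {i | k + m j ∈ oxDefined p i})) (y k) < ε :=
      Metric.tendsto_nhds.mp (hvalU k hkG) ε hε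
    obtain ⟨j, hj1, hj2⟩ := Ultrafilter.nonempty_of_mem (inter_mem h1 h2)
    exact ⟨_, hj1, hj2⟩
  refine ⟨part1, ?_⟩
  intro a ha
  have ha' : ∀ N : ℕ, ∀ ε : ℝ, 0 < ε → ∃ c, N ≤ c ∧ dist (x c) a < ε := omega_char.mp ha
  set y' : ℤ → X := fun n => if n ∈ G then y n else a with hy'def
  have hy'G : ∀ n ∈ G, y' n = y n := fun n hn => if_pos hn
  have hy'nG : ∀ n ∉ G, y' n = a := fun n hn => if_neg hn
  have hGclass : ∀ (i : ℕ) (n : ℤ), n + r i ∈ oxDefined p i →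
      ∀ m' : ℤ, (p i : ℤ) ∣ m' - n → m' ∈ G := by
    intro i n hn m' hdvd
    refine ⟨i, oxDefined_dvd hp ?_ hn⟩
    have e : (m' + r i) - (n + r i) = m' - n := by ring
    rw [e]; exact hdvd
  have hGy'Per : ∀ n ∈ G, n ∈ PerFull y' := by
    rintro n ⟨i, hi⟩
    refine ⟨p i, fg_pos hp i, fun m' hdvd => ?_⟩
    rw [hy'G m' (hGclass i n hi m' hdvd), hy'G n ⟨i, hi⟩]
    exact hskelPer i n hi m' hdvd
  have hnext : ∀ (l : ℕ) (n₀ : ℤ), n₀ ∉ G →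
      ∃ m', (p l : ℤ) ∣ m' - n₀ ∧ m' ∈ G ∧ y m' = x (l + 1) := by
    intro l n₀ hn₀
    have h : n₀ + r (l + 1) ∉ oxDefined p l := by
      intro hmem
      refine hn₀ ⟨l, oxDefined_dvd hp ?_ hmem⟩
      have e : (n₀ + r l) - (n₀ + r (l + 1)) = -(r (l + 1) - r l) := by ring
      rw [e]; exact dvd_neg.mpr (hrcons l)
    obtain ⟨t, ht1, ht2⟩ := exists_fill_next hp h
    refine ⟨n₀ + t * (p l : ℤ), ⟨t, by ring⟩, ?_, ?_⟩
    · refine ⟨l + 1, ?_⟩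
      have e : n₀ + t * (p l : ℤ) + r (l + 1) = n₀ + r (l + 1) + t * (p l : ℤ) := by ring
      rw [e]; exact ht1
    · have e : n₀ + t * (p l : ℤ) + r (l + 1) = n₀ + r (l + 1) + t * (p l : ℤ) := by ring
      have hmem : n₀ + t * (p l : ℤ) + r (l + 1) ∈ oxDefined p (l + 1) := by rw [e]; exact ht1
      rw [hskel (l + 1) _ hmem, e]
      exact oxtoby_fill hp x ht2 (by rw [← e]; exact hmem)
  have hboth : ∀ (i : ℕ) (n : ℤ),
      (n ∈ PerSet (p i) y' ↔ n ∈ PerSet (p i) y) ∧ (n ∈ PerSet (p i) y' → y' n = y n) := by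
    intro i n
    by_cases hclass : ∀ m' : ℤ, (p i : ℤ) ∣ m' - n → m' ∈ G
    · have hnG : n ∈ G := hclass n (by simp)
      have hiff : n ∈ PerSet (p i) y' ↔ n ∈ PerSet (p i) y := by
        constructor
        · intro h m' hdvd
          have h2 := h m' hdvd
          rwa [hy'G m' (hclass m' hdvd), hy'G n hnG] at h2
        · intro h m' hdvd
          rw [hy'G m' (hclass m' hdvd), hy'G n hnG]
          exact h m' hdvd
      exact ⟨hiff, fun _ => hy'G n hnG⟩
    · push_neg at hclass
      obtain ⟨n₀, hdvd₀, hn₀G⟩ := hclass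
      have hvals : ∀ l, i ≤ l → ∃ m', (p i : ℤ) ∣ m' - n ∧ m' ∈ G ∧ y m' = x (l + 1) := by
        intro l hl
        obtain ⟨m', hd, hmG, hval⟩ := hnext l n₀ hn₀G
        refine ⟨m', ?_, hmG, hval⟩
        have h1 : (p i : ℤ) ∣ m' - n₀ :=
          dvd_trans (Int.natCast_dvd_natCast.mpr (fg_dvd_of_le hp hl)) hd
        have h2 := dvd_add h1 hdvd₀
        have e : (m' - n₀) + (n₀ - n) = m' - n := by ring
        rwa [e] at h2
      have dir1 : n ∈ PerSet (p i) y → n ∈ PerSet (p i) y' ∧ y' n = y n := by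
        intro hPer
        have hxc : ∀ l, i ≤ l → x (l + 1) = y n := by
          intro l hl
          obtain ⟨m', hd, _, hval⟩ := hvals l hl
          rw [← hval]; exact hPer m' hd
        have hay : a = y n := by
          by_contra hne
          obtain ⟨c, hc1, hc2⟩ := ha' (i + 1) (dist a (y n)) (dist_pos.mpr hne)
          have hxcn : x c = y n := by
            have e : c - 1 + 1 = c := by omega
            rw [← e]; exact hxc (c - 1) (by omega)
          rw [hxcn, dist_comm] at hc2
          exact lt_irrefl _ hc2
        have hy'const : ∀ m' : ℤ, (p i : ℤ) ∣ m' - n → y' m' = y n := by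
          intro m' hd
          by_cases hmG : m' ∈ G
          · rw [hy'G m' hmG]; exact hPer m' hd
          · rw [hy'nG m' hmG]; exact hay
        have hy'n : y' n = y n := hy'const n (by simp)
        exact ⟨fun m' hd => by rw [hy'const m' hd, hy'n], hy'n⟩
      have dir2 : n ∈ PerSet (p i) y' → n ∈ PerSet (p i) y ∧ y' n = y n := by
        intro hPer'
        have hy'n : y' n = a := by
          have h2 := hPer' n₀ hdvd₀
          rw [hy'nG n₀ hn₀G] at h2
          exact h2.symm
        have hxa : ∀ l, i ≤ l → x (l + 1) = a := by
          intro l hl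
          obtain ⟨m', hd, hmG, hval⟩ := hvals l hl
          rw [← hval, ← hy'G m' hmG, hPer' m' hd, hy'n]
        have hya : ∀ m' : ℤ, (p i : ℤ) ∣ m' - n → y m' = a := by
          intro m' hd
          by_cases hmG : m' ∈ G
          · rw [← hy'G m' hmG, hPer' m' hd, hy'n]
          · exact hconstTail i a hxa m' hmG
        have hyn : y n = a := hya n (by simp)
        exact ⟨fun m' hd => by rw [hya m' hd, hyn], by rw [hy'n, hyn]⟩
      exact ⟨⟨fun h => (dir2 h).1, fun h => (dir1 h).1⟩, fun h => (dir2 h).2⟩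
  have hsk : ∀ i, SamePSkeleton (p i) y' y :=
    fun i => ⟨Set.ext (fun n => (hboth i n).1), fun n hn => (hboth i n).2 hn⟩
  -- approximation of y' by shifts of the Oxtoby sequence
  have happrox : ∀ (L : ℕ) (ε : ℝ), 0 < ε → ∃ mm : ℤ,
      ∀ n : ℤ, |n| ≤ (L : ℤ) → dist (oxtoby p x (n + mm)) (y' n) < ε := by
    intro L ε hε
    have hseed : ∀ n : ℤ, ∃ i, n ∈ G → n + r i ∈ oxDefined p i := by
      intro n
      by_cases h : n ∈ G
      · obtain ⟨i, hi⟩ := h; exact ⟨i, fun _ => hi⟩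
      · exact ⟨0, fun h' => absurd h' h⟩
    choose f hf using hseed
    set i₀ : ℕ := max (2 * L) ((Finset.Icc (-(L : ℤ)) (L : ℤ)).sup f) with hi₀
    have hpL : (2 * L : ℤ) < (p i₀ : ℤ) := by
      have h1 : 2 * L + 1 ≤ p (2 * L) := fg_lt hp (2 * L)
      have h2 : p (2 * L) ≤ p i₀ := fg_mono hp (le_max_left _ _)
      exact_mod_cast by omega
    have hcover : ∀ n : ℤ, |n| ≤ (L : ℤ) → n ∈ G → n + r i₀ ∈ oxDefined p i₀ := by
      intro n hn hG
      have hmem : n ∈ Finset.Icc (-(L : ℤ)) (L : ℤ) := Finset.mem_Icc.mpr (abs_le.mp hn)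
      have h1 : f n ≤ i₀ := le_trans (Finset.le_sup hmem) (le_max_right _ _)
      exact hup h1 (hf n hG)
    obtain ⟨c, hc1, hc2⟩ := ha' (i₀ + 1) ε hε
    set i : ℕ := c - 1 with hidef
    have hci : c = i + 1 := by omega
    have hii₀ : i₀ ≤ i := by omega
    have hpi : (0 : ℤ) < (p i : ℤ) := by exact_mod_cast fg_pos hp i
    set k₀ : ℤ := (-(L : ℤ) + r i) / (p i : ℤ) with hk₀def
    have hdm := Int.mul_ediv_add_emod (-(L : ℤ) + r i) (p i : ℤ)
    have hem1 := Int.emod_nonneg (-(L : ℤ) + r i) (ne_of_gt hpi)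
    have hem2 := Int.emod_lt_of_pos (-(L : ℤ) + r i) hpi
    have hk₀1 : k₀ * (p i : ℤ) ≤ -(L : ℤ) + r i := by
      rw [hk₀def]; linarith [hdm, hem1, mul_comm ((p i : ℤ)) ((-(L : ℤ) + r i) / (p i : ℤ))]
    have hk₀2 : -(L : ℤ) + r i < (k₀ + 1) * (p i : ℤ) := by
      rw [hk₀def]
      have e : ((-(L : ℤ) + r i) / (p i : ℤ) + 1) * (p i : ℤ)
          = (p i : ℤ) * ((-(L : ℤ) + r i) / (p i : ℤ)) + (p i : ℤ) := by ring
      rw [e]; linarith [hdm, hem2]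
    set mm : ℤ := r i + (-1 - k₀) * (p i : ℤ) with hmmdef
    refine ⟨mm, fun n hn => ?_⟩
    have hdmm : (p i : ℤ) ∣ (n + mm) - (n + r i) := ⟨-1 - k₀, by rw [hmmdef]; ring⟩
    by_cases hG : n ∈ G
    · have h1 : n + r i ∈ oxDefined p i := hup hii₀ (hcover n hn hG)
      have h2 : oxtoby p x (n + mm) = oxtoby p x (n + r i) := oxtoby_perSet hp x h1 hdmm
      rw [h2, hy'G n hG, ← hskel i n h1]
      simpa using hε
    · have hnri : n + r i ∉ oxDefined p i := fun h => hG ⟨i, h⟩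
      have hnotDi : n + mm ∉ oxDefined p i := by
        intro hmem
        refine hnri (oxDefined_dvd hp ?_ hmem)
        have e : (n + r i) - (n + mm) = -((n + mm) - (n + r i)) := by ring
        rw [e]; exact dvd_neg.mpr hdmm
      have hnL := abs_le.mp hn
      have hb1 : -(p i : ℤ) ≤ n + mm := by
        have e : n + mm = (n + r i) + (-1 - k₀) * (p i : ℤ) := by rw [hmmdef]; ring
        rw [e]; nlinarith [hk₀1, hnL.1]
      have hb2 : n + mm < (p i : ℤ) := by
        have e : n + mm = (n + r i) + (-1 - k₀) * (p i : ℤ) := by rw [hmmdef]; ring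
        have h2L : (2 * L : ℤ) < (p i : ℤ) := by
          have := fg_mono hp hii₀
          have hcast : (p i₀ : ℤ) ≤ (p i : ℤ) := by exact_mod_cast this
          linarith [hpL]
        rw [e]; nlinarith [hk₀2, hnL.2]
      have hmemD : n + mm ∈ oxDefined p (i + 1) := by
        rcases le_or_gt 0 (n + mm) with h0 | h0
        · refine Or.inr ⟨0, Or.inl (dvd_zero _), by simpa using h0, by simpa using hb2, hnotDi⟩
        · refine Or.inr ⟨-1, Or.inr (by norm_num), by simpa using hb1, by simpa using h0, hnotDi⟩
      rw [oxtoby_fill hp x hnotDi hmemD, hy'nG n hG, ← hci]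
      exact hc2
  have hex : ∀ L : ℕ, ∃ mm : ℤ,
      ∀ n : ℤ, |n| ≤ (L : ℤ) → dist (oxtoby p x (n + mm)) (y' n) < 1 / ((L : ℝ) + 1) :=
    fun L => happrox L _ (by positivity)
  choose ms hms using hex
  have htend : Tendsto (fun L => shiftZ (ms L) (oxtoby p x)) atTop (𝓝 y') := by
    rw [tendsto_pi_nhds]
    intro n
    refine Metric.tendsto_atTop.mpr (fun ε hε => ?_)
    obtain ⟨l₀, hl₀⟩ := exists_nat_one_div_lt hε
    refine ⟨max l₀ n.natAbs, fun L hL => ?_⟩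
    have h1 : |n| ≤ (L : ℤ) := by
      have h2 : n.natAbs ≤ L := le_trans (le_max_right _ _) hL
      rw [Int.abs_eq_natAbs]; exact_mod_cast h2
    have h2 := hms L n h1
    have h3 : 1 / ((L : ℝ) + 1) ≤ 1 / ((l₀ : ℝ) + 1) := by
      apply one_div_le_one_div_of_le (by positivity)
      have h4 : l₀ ≤ L := le_trans (le_max_left _ _) hL
      have := (Nat.cast_le (α := ℝ)).mpr h4
      linarith
    calc dist (shiftZ (ms L) (oxtoby p x) n) (y' n)
        = dist (oxtoby p x (n + ms L)) (y' n) := rfl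
      _ < 1 / ((L : ℝ) + 1) := h2
      _ ≤ 1 / ((l₀ : ℝ) + 1) := h3
      _ < ε := hl₀
  have hy'cl : y' ∈ orbitClosure (oxtoby p x) :=
    mem_closure_of_tendsto htend (Filter.Eventually.of_forall (fun L => ⟨ms L, rfl⟩))
  refine ⟨y', hy'cl, hsk, fun k hk => ?_⟩
  by_cases hG : k ∈ G
  · exact absurd (hGy'Per k hG) hk
  · exact hy'nG k hG
end

section
/- Let (X,d) be a compact metric space and let f be a conjugacy between the orbit closures (O̅(z),S) and (O̅(z'),S) of two Toeplitz sequences z, z' ∈ X^ℤ. Let (p_i) be a period structure of z. Then for every ε > 0 there is i₀ ∈ ℕ such that for all i ≥ i₀ and all k, k' ∈ ℤ: if z(k p_i + t) = z(k' p_i + t) for all 0 ≤ t < p_i, then d(f(z)(k p_i + s), f(z)(k' p_i + s)) < ε for all 0 ≤ s < p_i. -/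
open Filter Topology

/-!
A conjugacy `f` is continuous on the compact orbit closure of `z`, so the coordinate
`w ↦ f w 0` is uniformly continuous there: up to `ε` it only depends on finitely many
coordinates of `w`. Since `f` commutes with the shift, `f z (k p_i + s)` is this coordinate
evaluated at `S^(k p_i + s) z`. Finitely many positions `-N, …, N` all lie in `Per_{p_i}(z)` for
large `i`, and then two equal `p_i`-blocks of `z` stay equal on the window `[-N, p_i + N)`, so
`S^(k p_i + s) z` and `S^(k' p_i + s) z` agree on the relevant coordinates.
-/

theorem exists_finset_dist_lt_of_eqOn {ι X Y : Type*} [UniformSpace X] [PseudoMetricSpace Y]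
    {K : Set (ι → X)} (hK : IsCompact K) {g : (ι → X) → Y} (hg : ContinuousOn g K)
    {ε : ℝ} (hε : 0 < ε) :
    ∃ F : Finset ι, ∀ u ∈ K, ∀ v ∈ K, (∀ i ∈ F, u i = v i) → dist (g u) (g v) < ε := by
  have hunif := hK.uniformContinuousOn_of_continuous hg (Metric.dist_mem_uniformity hε)
  rw [mem_map, mem_inf_principal, Pi.uniformity, mem_iInf] at hunif
  obtain ⟨I, hI, V, hV, hU⟩ := hunif
  refine ⟨hI.toFinset, fun u hu v hv huv => ?_⟩
  have hmem : (u, v) ∈ ⋂ i, V i := by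
    refine Set.mem_iInter.2 fun i => ?_
    obtain ⟨W, hW, hWV⟩ := hV i
    exact hWV (by simpa [huv i (hI.mem_toFinset.2 i.2)] using refl_mem_uniformity hW)
  rw [← hU] at hmem
  exact hmem (Set.mk_mem_prod hu hv)

section Periodicity

variable {X : Type*} {z : ℤ → X}

theorem perSet_subset_of_dvd {q r : ℕ} (h : q ∣ r) : PerSet q z ⊆ PerSet r z :=
  fun _ hn m hm => hn m ((Int.natCast_dvd_natCast.2 h).trans hm)

theorem mem_perSet_of_sub_mem {p : ℕ} {n : ℤ} (h : n - p ∈ PerSet p z) : n ∈ PerSet p z := by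
  intro m hm
  rw [h m (by rw [sub_sub_eq_add_sub, add_sub_right_comm]; exact hm.add (dvd_refl _)),
    h n (by simp)]

theorem apply_mul_add_eq_of_mem_perSet {p : ℕ} {n : ℤ} (hn : n ∈ PerSet p z) (k k' : ℤ) :
    z (k * p + n) = z (k' * p + n) := by
  rw [hn (k * p + n) ⟨k, by ring⟩, hn (k' * p + n) ⟨k', by ring⟩]

theorem apply_mul_add_eq_of_block_eq {p : ℕ} {k k' N : ℤ}
    (hblock : ∀ t : ℤ, 0 ≤ t → t < p → z (k * p + t) = z (k' * p + t))
    (hwin : ∀ n : ℤ, |n| ≤ N → n ∈ PerSet p z) {m : ℤ} (hm₁ : -N ≤ m) (hm₂ : m < p + N) :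
    z (k * p + m) = z (k' * p + m) := by
  rcases lt_or_ge m 0 with hneg | hnonneg
  · exact apply_mul_add_eq_of_mem_perSet (hwin m (abs_le.2 ⟨hm₁, by omega⟩)) k k'
  rcases lt_or_ge m p with hlt | hge
  · exact hblock m hnonneg hlt
  · exact apply_mul_add_eq_of_mem_perSet
      (mem_perSet_of_sub_mem (hwin _ (abs_le.2 ⟨by omega, by omega⟩))) k k'

variable {p : ℕ → ℕ}

theorem eventually_forall_abs_le_mem_perSet (hdvd : ∀ i, p i ∣ p (i + 1))
    (hcov : ∀ n : ℤ, ∃ i, n ∈ PerSet (p i) z) (N : ℕ) :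
    ∀ᶠ i in atTop, ∀ n : ℤ, |n| ≤ N → n ∈ PerSet (p i) z := by
  have h := (eventually_all_finset (Finset.Icc (-(N : ℤ)) N)).2 fun n _ => by
    obtain ⟨i, hi⟩ := hcov n
    exact eventually_atTop.2 ⟨i, fun j hj =>
      perSet_subset_of_dvd (Nat.rel_of_forall_rel_succ_of_le (· ∣ ·) hdvd hj) hi⟩
  filter_upwards [h] with i hi n hn
  exact hi n (Finset.mem_Icc.2 (abs_le.1 hn))

theorem eventually_shiftZ_eqOn_of_block_eq (hdvd : ∀ i, p i ∣ p (i + 1))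
    (hcov : ∀ n : ℤ, ∃ i, n ∈ PerSet (p i) z) (F : Finset ℤ) :
    ∀ᶠ i in atTop, ∀ k k' : ℤ,
      (∀ t : ℤ, 0 ≤ t → t < (p i : ℤ) → z (k * (p i : ℤ) + t) = z (k' * (p i : ℤ) + t)) →
      ∀ s : ℤ, 0 ≤ s → s < (p i : ℤ) →
        ∀ n ∈ F, shiftZ (k * (p i : ℤ) + s) z n = shiftZ (k' * (p i : ℤ) + s) z n := by
  set N := F.sup Int.natAbs
  filter_upwards [eventually_forall_abs_le_mem_perSet hdvd hcov N]
    with i hwin k k' hblock s hs₀ hs₁ n hn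
  have hnN : |n| ≤ N := by
    rw [Int.abs_eq_natAbs]
    exact Nat.cast_le.2 (Finset.le_sup (f := Int.natAbs) hn)
  have key := apply_mul_add_eq_of_block_eq hblock hwin (m := n + s)
    (by linarith [(abs_le.1 hnN).1]) (by linarith [(abs_le.1 hnN).2])
  simpa only [shiftZ, add_left_comm n] using key

end Periodicity

section Shift

variable {X : Type*}

theorem shiftZ_shiftZ (a b : ℤ) (w : ℤ → X) : shiftZ a (shiftZ b w) = shiftZ (a + b) w := by
  funext n
  simp only [shiftZ, add_assoc]

theorem shiftZ_zero (w : ℤ → X) : shiftZ 0 w = w := by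
  funext n
  simp only [shiftZ, add_zero]

theorem shiftZ_injective (m : ℤ) : Function.Injective (shiftZ m : (ℤ → X) → ℤ → X) :=
  Function.LeftInverse.injective (g := shiftZ (-m)) fun w => by
    rw [shiftZ_shiftZ, neg_add_cancel, shiftZ_zero]

theorem shiftZ_mem_orbitClosure [TopologicalSpace X] (z : ℤ → X) (m : ℤ) :
    shiftZ m z ∈ orbitClosure z :=
  subset_closure ⟨m, rfl⟩

theorem map_shiftZ_of_commute [TopologicalSpace X] {z : ℤ → X} {f : (ℤ → X) → ℤ → X}
    (hcomm : ∀ a ∈ orbitClosure z, f (shiftZ 1 a) = shiftZ 1 (f a)) (m : ℤ) :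
    f (shiftZ m z) = shiftZ m (f z) := by
  induction m using Int.induction_on with
  | zero => rw [shiftZ_zero, shiftZ_zero]
  | succ i ih =>
    calc f (shiftZ (i + 1) z) = f (shiftZ 1 (shiftZ i z)) := by rw [shiftZ_shiftZ, add_comm]
      _ = shiftZ 1 (shiftZ i (f z)) := by rw [hcomm _ (shiftZ_mem_orbitClosure z i), ih]
      _ = shiftZ (i + 1) (f z) := by rw [shiftZ_shiftZ, add_comm]
  | pred i ih =>
    apply shiftZ_injective 1
    calc shiftZ 1 (f (shiftZ (-i - 1) z)) = f (shiftZ 1 (shiftZ (-i - 1) z)) :=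
          (hcomm _ (shiftZ_mem_orbitClosure z _)).symm
      _ = shiftZ 1 (shiftZ (-i - 1) (f z)) := by
        rw [shiftZ_shiftZ, shiftZ_shiftZ, add_sub_cancel, ih]

end Shift

theorem conjugacy_equal_blocks_close_general {X : Type*} [MetricSpace X] [CompactSpace X]
    (z z' : ℤ → X)
    (f : (ℤ → X) → (ℤ → X))
    (hf : IsConjugacy (orbitClosure z) (orbitClosure z') f)
    (p : ℕ → ℕ) (hp : IsPeriodStructure p z) :
    ∀ ε : ℝ, 0 < ε → ∃ i₀ : ℕ, ∀ i : ℕ, i₀ ≤ i → ∀ k k' : ℤ,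
      (∀ t : ℤ, 0 ≤ t → t < (p i : ℤ) →
        z (k * (p i : ℤ) + t) = z (k' * (p i : ℤ) + t)) →
      ∀ s : ℤ, 0 ≤ s → s < (p i : ℤ) →
        dist (f z (k * (p i : ℤ) + s)) (f z (k' * (p i : ℤ) + s)) < ε := by
  intro ε hε
  obtain ⟨-, hcont, -, hcomm⟩ := hf
  obtain ⟨F, hF⟩ := exists_finset_dist_lt_of_eqOn isClosed_closure.isCompact
    ((continuous_apply 0).comp_continuousOn hcont) hε
  obtain ⟨i₀, hi₀⟩ := eventually_atTop.1 (eventually_shiftZ_eqOn_of_block_eq hp.2.2.1 hp.2.2.2 F)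
  refine ⟨i₀, fun i hi k k' hblock s hs₀ hs₁ => ?_⟩
  have hval (m : ℤ) : f z m = f (shiftZ m z) 0 := by
    rw [map_shiftZ_of_commute hcomm, shiftZ, zero_add]
  rw [hval, hval]
  exact hF _ (shiftZ_mem_orbitClosure z _) _ (shiftZ_mem_orbitClosure z _)
    (hi₀ i hi k k' hblock s hs₀ hs₁)

/-- Lemma `L2`: for a conjugacy `f` between Toeplitz systems and a period
structure `(p_i)` of `z`: for every `ε > 0` there is `i₀` such that for `i ≥ i₀`, equal
blocks `z[k p_i, (k+1) p_i) = z[k' p_i, (k'+1) p_i)` give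
`d(f(z)(k p_i + s), f(z)(k' p_i + s)) < ε` for all `0 ≤ s < p_i`. -/
theorem conjugacy_equal_blocks_close {X : Type*} [MetricSpace X] [CompactSpace X]
    (z z' : ℤ → X) (hz : IsToeplitz z) (hz' : IsToeplitz z')
    (f : (ℤ → X) → (ℤ → X))
    (hf : IsConjugacy (orbitClosure z) (orbitClosure z') f)
    (p : ℕ → ℕ) (hp : IsPeriodStructure p z) :
    ∀ ε : ℝ, 0 < ε → ∃ i₀ : ℕ, ∀ i : ℕ, i₀ ≤ i → ∀ k k' : ℤ,
      (∀ t : ℤ, 0 ≤ t → t < (p i : ℤ) →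
        z (k * (p i : ℤ) + t) = z (k' * (p i : ℤ) + t)) →
      ∀ s : ℤ, 0 ≤ s → s < (p i : ℤ) →
        dist (f z (k * (p i : ℤ) + s)) (f z (k' * (p i : ℤ) + s)) < ε :=
  conjugacy_equal_blocks_close_general z z' f hf p hp
end
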